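/- Let ω = s/q with s, q coprime complex polynomials, q having all roots on the unit circle, and let T_ω be the Toeplitz-like operator on H^p with domain {g ∈ H^p : s·g = q·h + r, h ∈ H^p, r ∈ P_{deg(q)-1}} and T_ω g = h. Then the domain of T_ω is invariant under multiplication by z, and T_{z^{-1}} T_ω T_z f = T_ω f for all f in the domain, i.e., if s·f = q·h + r then s·(z·f) = q·(z·h + c) + r_0 with c ∈ ℂ, r_0 ∈ P_{deg(q)-1}, and removing the constant term recovers h. -/

import Mathlib

open Complex MeasureTheory Metric Polynomial Pointwise

noncomputable section

/-- Membership in the Hardy space `H^p` of the unit disc: analytic on the open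
unit disc with uniformly bounded `p`-means on circles of radius `r < 1`. -/
def MemHp (p : ℝ) (f : ℂ → ℂ) : Prop :=
  AnalyticOn ℂ f (ball (0 : ℂ) 1) ∧
  ∃ C : ℝ, ∀ r : ℝ, 0 ≤ r → r < 1 →
    (∫ θ in (0:ℝ)..(2 * Real.pi),
      ‖f ((r : ℂ) * Complex.exp (θ * Complex.I))‖ ^ p) ≤ C

/-- The Hardy space `H^p` as a set of functions. -/
def Hp (p : ℝ) : Set (ℂ → ℂ) := {f | MemHp p f}

/-- Multiplication of a set of functions by a polynomial: `s·S`. -/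
def polyMul (s : Polynomial ℂ) (S : Set (ℂ → ℂ)) : Set (ℂ → ℂ) :=
  (fun f => fun z => s.eval z * f z) '' S

/-- The polynomials of degree `< n`, viewed as functions. -/
def polyLt (n : WithBot ℕ) : Set (ℂ → ℂ) :=
  {f | ∃ r : Polynomial ℂ, r.degree < n ∧ f = fun z => r.eval z}

/-- The constant functions. -/
def consts : Set (ℂ → ℂ) := {f | ∃ c : ℂ, f = fun _ => c}

/-! ### Auxiliary lemmas -/

lemma circle_abs {r : ℝ} (h0 : 0 ≤ r) (θ : ℝ) :
    ‖(r : ℂ) * Complex.exp (θ * Complex.I)‖ = r := by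
  rw [norm_mul, Complex.norm_exp_ofReal_mul_I, Complex.norm_real, Real.norm_eq_abs, mul_one,
    _root_.abs_of_nonneg h0]

lemma circle_mem_ball {r : ℝ} (h0 : 0 ≤ r) (h1 : r < 1) (θ : ℝ) :
    (r : ℂ) * Complex.exp (θ * Complex.I) ∈ ball (0 : ℂ) 1 := by
  rw [mem_ball, dist_zero_right, circle_abs h0]
  exact h1

lemma cont_integrand {f : ℂ → ℂ} (hf : AnalyticOn ℂ f (ball (0:ℂ) 1)) {r : ℝ}
    (h0 : 0 ≤ r) (h1 : r < 1) {p : ℝ} (hp : 0 ≤ p) :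
    Continuous fun θ : ℝ => ‖f ((r : ℂ) * Complex.exp (θ * Complex.I))‖ ^ p := by
  have hc : ContinuousOn f (ball (0:ℂ) 1) := hf.continuousOn
  have hmap : Continuous fun θ : ℝ => (r : ℂ) * Complex.exp (θ * Complex.I) := by
    fun_prop
  have h2 : Continuous fun θ : ℝ => f ((r : ℂ) * Complex.exp (θ * Complex.I)) :=
    hc.comp_continuous hmap (circle_mem_ball h0 h1)
  exact (continuous_norm.comp h2).rpow_const (fun θ => Or.inr hp)

lemma memHp_mul_z {p : ℝ} (hp : 0 ≤ p) {f : ℂ → ℂ} (hf : MemHp p f) :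
    MemHp p fun z => z * f z := by
  obtain ⟨ha, C, hC⟩ := hf
  have ha' : AnalyticOn ℂ (fun z => z * f z) (ball (0:ℂ) 1) :=
    (analyticOn_id (𝕜 := ℂ)).mul ha
  refine ⟨ha', C, fun r h0 h1 => ?_⟩
  refine le_trans (intervalIntegral.integral_mono_on (by positivity) ?_ ?_ ?_) (hC r h0 h1)
  · exact (cont_integrand ha' h0 h1 hp).intervalIntegrable _ _
  · exact (cont_integrand ha h0 h1 hp).intervalIntegrable _ _
  · intro θ _
    have hb : ‖(r : ℂ) * Complex.exp (θ * Complex.I) *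
        f ((r : ℂ) * Complex.exp (θ * Complex.I))‖ ≤
        ‖f ((r : ℂ) * Complex.exp (θ * Complex.I))‖ := by
      rw [norm_mul]
      refine mul_le_of_le_one_left (norm_nonneg _) ?_
      rw [circle_abs h0]
      exact h1.le
    exact Real.rpow_le_rpow (norm_nonneg _) hb hp

lemma rpow_add_le {a b p : ℝ} (ha : 0 ≤ a) (hb : 0 ≤ b) (hp : 0 ≤ p) :
    (a + b) ^ p ≤ 2 ^ p * (a ^ p + b ^ p) := by
  have h1 : a + b ≤ 2 * max a b := by
    rcases max_cases a b with ⟨hm, hle⟩ | ⟨hm, hle⟩ <;> nlinarith [le_max_left a b, le_max_right a b]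
  have h2 : (a + b) ^ p ≤ (2 * max a b) ^ p :=
    Real.rpow_le_rpow (by positivity) h1 hp
  have h3 : (2 * max a b) ^ p = 2 ^ p * (max a b) ^ p :=
    Real.mul_rpow (by norm_num) (le_max_of_le_left ha)
  have h4 : (max a b) ^ p ≤ a ^ p + b ^ p := by
    rcases max_cases a b with ⟨hm, _⟩ | ⟨hm, _⟩ <;> rw [hm]
    · nlinarith [Real.rpow_nonneg hb p]
    · nlinarith [Real.rpow_nonneg ha p]
  calc (a + b) ^ p ≤ 2 ^ p * (max a b) ^ p := by rw [← h3]; exact h2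
    _ ≤ 2 ^ p * (a ^ p + b ^ p) := by
        have : (0:ℝ) ≤ 2 ^ p := by positivity
        nlinarith

lemma memHp_add_const {p : ℝ} (hp : 0 ≤ p) {g : ℂ → ℂ} (hg : MemHp p g) (c : ℂ) :
    MemHp p fun z => g z + c := by
  obtain ⟨ha, C, hC⟩ := hg
  have ha' : AnalyticOn ℂ (fun z => g z + c) (ball (0:ℂ) 1) :=
    ha.add analyticOn_const
  refine ⟨ha', 2 ^ p * C + 2 ^ p * (‖c‖ ^ p) * (2 * Real.pi), fun r h0 h1 => ?_⟩
  set G : ℝ → ℝ := fun θ => ‖g ((r : ℂ) * Complex.exp (θ * Complex.I))‖ ^ p with hG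
  have hGc : Continuous G := cont_integrand ha h0 h1 hp
  have hint1 : IntervalIntegrable
      (fun θ => ‖(fun z => g z + c) ((r : ℂ) * Complex.exp (θ * Complex.I))‖ ^ p)
      volume (0:ℝ) (2 * Real.pi) :=
    (cont_integrand ha' h0 h1 hp).intervalIntegrable (0:ℝ) (2 * Real.pi)
  have hint2 : IntervalIntegrable (fun θ => 2 ^ p * (G θ + ‖c‖ ^ p))
      volume (0:ℝ) (2 * Real.pi) := by
    exact (continuous_const.mul (hGc.add continuous_const)).intervalIntegrable _ _
  have hmono : (∫ θ in (0:ℝ)..(2 * Real.pi),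
      ‖(fun z => g z + c) ((r : ℂ) * Complex.exp (θ * Complex.I))‖ ^ p) ≤
      ∫ θ in (0:ℝ)..(2 * Real.pi), 2 ^ p * (G θ + ‖c‖ ^ p) := by
    refine intervalIntegral.integral_mono_on (by positivity) hint1 hint2 ?_
    intro θ _
    calc ‖g ((r : ℂ) * Complex.exp (θ * Complex.I)) + c‖ ^ p
        ≤ (‖g ((r : ℂ) * Complex.exp (θ * Complex.I))‖ + ‖c‖) ^ p := by
          exact Real.rpow_le_rpow (norm_nonneg _)
            (norm_add_le _ _) hp
      _ ≤ 2 ^ p * (G θ + ‖c‖ ^ p) :=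
          rpow_add_le (norm_nonneg _) (norm_nonneg _) hp
  have hval : (∫ θ in (0:ℝ)..(2 * Real.pi), 2 ^ p * (G θ + ‖c‖ ^ p)) =
      2 ^ p * ((∫ θ in (0:ℝ)..(2 * Real.pi), G θ) + (2 * Real.pi) * ‖c‖ ^ p) := by
    rw [intervalIntegral.integral_const_mul,
      intervalIntegral.integral_add (hGc.intervalIntegrable _ _)
        (intervalIntegrable_const (μ := volume) (c := ‖c‖ ^ p)), intervalIntegral.integral_const]
    simp only [smul_eq_mul, sub_zero]
  have hGle : (∫ θ in (0:ℝ)..(2 * Real.pi), G θ) ≤ C := hC r h0 h1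
  refine hmono.trans ?_
  rw [hval]
  have h2p : (0:ℝ) ≤ 2 ^ p := by positivity
  nlinarith [Real.pi_pos, Real.rpow_nonneg (norm_nonneg c) p]

/-- The domain of `T_ω` is invariant under the forward shift, and
`T_{z⁻¹} T_ω T_z f = T_ω f`: if `s·f = q·h + r` then
`s·(z·f) = q·(z·h + c) + r₀` with `c ∈ ℂ` and `deg r₀ < deg q`. -/
theorem shift_invariance (p : ℝ) (hp : 1 < p) (s q : Polynomial ℂ)
    (hco : IsCoprime s q) (hq : q ≠ 0)
    (hqr : ∀ α : ℂ, q.eval α = 0 → ‖α‖ = 1)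
    (f h : ℂ → ℂ) (r : Polynomial ℂ)
    (hf : MemHp p f) (hh : MemHp p h) (hr : r.degree < q.degree)
    (heq : (fun z => s.eval z * f z) = fun z => q.eval z * h z + r.eval z) :
    MemHp p (fun z => z * f z) ∧
      ∃ (c : ℂ) (r₀ : Polynomial ℂ), r₀.degree < q.degree ∧
        MemHp p (fun z => z * h z + c) ∧
        ((fun z => s.eval z * (z * f z)) =
          fun z => q.eval z * (z * h z + c) + r₀.eval z) := by
  have hp0 : (0:ℝ) ≤ p := by linarith
  set d : Polynomial ℂ := X * r with hd
  set c : ℂ := (d / q).coeff 0 with hc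
  have hdeg0 : (d / q).degree ≤ 0 := by
    by_cases hz : d / q = 0
    · simp [hz]
    · have hge : q.degree ≤ d.degree :=
        le_of_not_gt (fun hlt => hz ((Polynomial.div_eq_zero_iff hq).2 hlt))
      have hadd := Polynomial.degree_add_div hq hge
      have hdle : d.degree ≤ q.degree := by
        by_cases hr0 : r = 0
        · simp [hd, hr0]
        · have hdm : d.degree = r.degree + 1 := by
            rw [hd, degree_mul, degree_X, add_comm]
          rw [hdm]
          exact Nat.WithBot.add_one_le_of_lt hr
      have hqb : q.degree ≠ ⊥ := by
        simpa [Polynomial.degree_eq_bot] using hq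
      have h2 : q.degree + (d / q).degree ≤ q.degree + 0 := by
        rw [hadd, add_zero]; exact hdle
      exact (WithBot.add_le_add_iff_left hqb).1 h2
  have hCc : d / q = Polynomial.C c := eq_C_of_degree_le_zero hdeg0
  have hmod : q * (d / q) + d % q = d := EuclideanDomain.div_add_mod d q
  have hmodlt : (d % q).degree < q.degree := EuclideanDomain.mod_lt _ hq
  have hzh : MemHp p (fun z => z * h z) := memHp_mul_z hp0 hh
  refine ⟨memHp_mul_z hp0 hf, c, d % q, hmodlt, memHp_add_const hp0 hzh c, ?_⟩
  funext z
  have hz := congrFun heq z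
  have hev := congrArg (Polynomial.eval z) hmod
  simp only [hCc, Polynomial.eval_add, Polynomial.eval_mul, Polynomial.eval_C, hd,
    Polynomial.eval_X] at hev
  rw [← hd] at hev
  rw [hCc, Polynomial.eval_C] at hev
  linear_combination z * hz - hev
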